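/- arXiv:2402.10498 — 2 statements merged into one kernel-verified Lean document; each statement's English description precedes it below -/
import Mathlib

section
/- Let A₁, A₂ be abelian groups with subgroups B₁ ⊂ A₁, B₂ ⊂ A₂, and let C ⊂ A₁ × A₂ be a subgroup. Then there is an exact sequence 0 → A₂ / (B₂ + im(ker(C → A₁/B₁) → A₂)) → (A₁ × A₂) / (B₁ × B₂ + C) → A₁ / (B₁ + im(C → A₁)) → 0, where C → A₁/B₁ is the composite of the projection C → A₁ with the quotient map, and the sums are taken inside A₁ × A₂ (resp. A₁, A₂) via the natural embeddings. -/
/-!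
Every subgroup `N ⊆ A₁ × A₂` gives an exact sequence
`0 → A₂ ⧸ inr⁻¹ N → (A₁ × A₂) ⧸ N → A₁ ⧸ fst N → 0`: if `a₁ = n.1` with `n ∈ N`, then
`a - n = (0, a.2 - n.2)`. For `N = B₁ × B₂ + C` one has `fst N = B₁ + fst C`, and `(0, a₂) ∈ N`
exactly when `a₂ = b₂ + c.2` with `b₂ ∈ B₂`, `c ∈ C` and `c.1 ∈ B₁`.
-/

namespace AddSubgroup

variable {A₁ A₂ : Type*} [AddCommGroup A₁] [AddCommGroup A₂]

theorem map_fst_prod (B₁ : AddSubgroup A₁) (B₂ : AddSubgroup A₂) :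
    (B₁.prod B₂).map (AddMonoidHom.fst A₁ A₂) = B₁ := by
  ext a₁
  refine ⟨?_, fun h => ⟨(a₁, 0), ⟨h, B₂.zero_mem⟩, rfl⟩⟩
  rintro ⟨b, hb, rfl⟩
  exact hb.1

theorem map_fst_prod_sup (B₁ : AddSubgroup A₁) (B₂ : AddSubgroup A₂)
    (C : AddSubgroup (A₁ × A₂)) :
    (B₁.prod B₂ ⊔ C).map (AddMonoidHom.fst A₁ A₂) = B₁ ⊔ C.map (AddMonoidHom.fst A₁ A₂) := by
  rw [map_sup, map_fst_prod]

theorem comap_inr_prod_sup (B₁ : AddSubgroup A₁) (B₂ : AddSubgroup A₂)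
    (C : AddSubgroup (A₁ × A₂)) :
    (B₁.prod B₂ ⊔ C).comap (AddMonoidHom.inr A₁ A₂) =
      B₂ ⊔ (C ⊓ B₁.prod ⊤).map (AddMonoidHom.snd A₁ A₂) := by
  ext a₂
  simp only [mem_comap, AddMonoidHom.inr_apply, mem_sup]
  constructor
  · rintro ⟨b, ⟨hb₁, hb₂⟩, c, hc, hbc⟩
    have hc₁ : c.1 = -b.1 := eq_neg_of_add_eq_zero_right (congrArg Prod.fst hbc)
    have hc' : c ∈ C ⊓ B₁.prod ⊤ := ⟨hc, mem_prod.2 ⟨hc₁ ▸ neg_mem hb₁, trivial⟩⟩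
    exact ⟨b.2, hb₂, c.2, ⟨c, hc', rfl⟩, congrArg Prod.snd hbc⟩
  · rintro ⟨b₂, hb₂, _, ⟨c, ⟨hc, hcB⟩, rfl⟩, rfl⟩
    refine ⟨(-c.1, b₂), mem_prod.2 ⟨neg_mem (mem_prod.1 hcB).1, hb₂⟩, c, hc, ?_⟩
    ext <;> simp

end AddSubgroup

namespace QuotientAddGroup

theorem injective_map_comap {G H : Type*} [AddGroup G] [AddGroup H] (N : AddSubgroup H)
    [N.Normal] (f : G →+ H) : Function.Injective (map (N.comap f) N f le_rfl) := by
  rw [injective_iff_map_eq_zero]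
  intro x hx
  rwa [← AddMonoidHom.mem_ker, ker_map, map_mk'_self, AddSubgroup.mem_bot] at hx

variable {A₁ A₂ : Type*} [AddCommGroup A₁] [AddCommGroup A₂] (N : AddSubgroup (A₁ × A₂))

theorem surjective_map_fst :
    Function.Surjective
      (map N (N.map (AddMonoidHom.fst A₁ A₂)) _ (AddSubgroup.le_comap_map _ N)) :=
  map_surjective_of_surjective _ _ _ ((mk'_surjective _).comp Prod.fst_surjective) _

theorem exact_map_inr_map_fst :
    Function.Exact (map (N.comap (AddMonoidHom.inr A₁ A₂)) N _ le_rfl)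
      (map N (N.map (AddMonoidHom.fst A₁ A₂)) _ (AddSubgroup.le_comap_map _ N)) := by
  intro x
  induction x using QuotientAddGroup.induction_on with | H a => ?_
  rw [map_mk, AddMonoidHom.coe_fst, eq_zero_iff]
  constructor
  · rintro ⟨n, hn, hn₁⟩
    refine ⟨mk (a.2 - n.2), ?_⟩
    rw [map_mk, AddMonoidHom.inr_apply, QuotientAddGroup.eq]
    have hdiff : -((0 : A₁), a.2 - n.2) + a = n := by ext <;> simp [← hn₁]
    rwa [hdiff]
  · rintro ⟨y, hy⟩
    induction y using QuotientAddGroup.induction_on with | H a₂ => ?_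
    rw [map_mk, AddMonoidHom.inr_apply, QuotientAddGroup.eq] at hy
    exact ⟨_, hy, by simp⟩

-- Stated for subgroups equal to `inr⁻¹ N` and `fst N`, so that it applies to quotients whose
-- normality instances are not syntactically those of `comap` and `map`.
theorem exists_injective_surjective_exact_of_prod {M₂ : AddSubgroup A₂} {M₁ : AddSubgroup A₁}
    (h₂ : N.comap (AddMonoidHom.inr A₁ A₂) = M₂) (h₁ : N.map (AddMonoidHom.fst A₁ A₂) = M₁) :
    ∃ (f : A₂ ⧸ M₂ →+ (A₁ × A₂) ⧸ N) (g : (A₁ × A₂) ⧸ N →+ A₁ ⧸ M₁),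
      (∀ a₂ : A₂, f (mk a₂) = mk ((0 : A₁), a₂)) ∧ (∀ a : A₁ × A₂, g (mk a) = mk a.1) ∧
      Function.Injective f ∧ Function.Surjective g ∧ Function.Exact f g := by
  subst h₂ h₁
  exact ⟨_, _, fun _ => rfl, fun _ => rfl, injective_map_comap N _, surjective_map_fst N,
    exact_map_inr_map_fst N⟩

end QuotientAddGroup

/-- For abelian groups `B₁ ⊂ A₁`, `B₂ ⊂ A₂` and `C ⊂ A₁ × A₂`, there is an
exact sequence
`0 → A₂/(B₂ + im(ker(C → A₁/B₁) → A₂)) → (A₁×A₂)/(B₁×B₂ + C) → A₁/(B₁ + im(C → A₁)) → 0`,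
the first map induced by `a₂ ↦ [(0, a₂)]` and the second by `(a₁, a₂) ↦ a₁`.
Note `ker(C → A₁/B₁)` maps to `A₂` with image `(C ⊓ (B₁ × ⊤)).map snd`. -/
theorem stmt_3 (A₁ A₂ : Type*) [AddCommGroup A₁] [AddCommGroup A₂]
    (B₁ : AddSubgroup A₁) (B₂ : AddSubgroup A₂) (C : AddSubgroup (A₁ × A₂)) :
    ∃ (f : A₂ ⧸ (B₂ ⊔ (C ⊓ B₁.prod ⊤).map (AddMonoidHom.snd A₁ A₂)) →+
        (A₁ × A₂) ⧸ (B₁.prod B₂ ⊔ C))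
      (g : (A₁ × A₂) ⧸ (B₁.prod B₂ ⊔ C) →+
        A₁ ⧸ (B₁ ⊔ C.map (AddMonoidHom.fst A₁ A₂))),
      (∀ a₂ : A₂, f (QuotientAddGroup.mk a₂) = QuotientAddGroup.mk ((0 : A₁), a₂)) ∧
      (∀ a : A₁ × A₂, g (QuotientAddGroup.mk a) = QuotientAddGroup.mk a.1) ∧
      Function.Injective f ∧ Function.Surjective g ∧ Function.Exact ⇑f ⇑g :=
  QuotientAddGroup.exists_injective_surjective_exact_of_prod _
    (AddSubgroup.comap_inr_prod_sup B₁ B₂ C) (AddSubgroup.map_fst_prod_sup B₁ B₂ C)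
end

section
/- Let R be a discrete valuation ring with uniformizer π and finite residue field κ, let f ∈ R[x₀,…,x_n] be homogeneous of degree d ≥ 1 such that the affine cone CX = {f = 0} ⊂ 𝔸^{n+1} is smooth away from the origin over κ. Then for r ≥ 1, #CX(R/π^r) = Σ_{i=0}^{⌈r/d⌉−1} (#κ)^{(n+1)(d−1)i} · #(CX∖0)(R/π^{r−di}) + (#κ)^{(n+1)(r−⌈r/d⌉)}, where (CX∖0)(R/π^m) denotes tuples in CX(R/π^m) with at least one coordinate a unit. Moreover, by Hensel's lemma, #(CX∖0)(R/π^m) = (#κ)^{(m−1)n} · #(CX∖0)(κ) for m ≥ 1. -/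
/-!
Write `q = #κ`. A point of the cone modulo `π ^ (1 + s)` either has a unit coordinate, or it is
`π • y` for a unique `y` modulo `π ^ s`. By homogeneity `f (π • y) = π ^ d * f y`, so the points
of the second kind are counted by the solutions of `π ^ (d - 1) * f y = 0` modulo `π ^ s`: this
condition is vacuous for `s < d` and otherwise only sees `y` modulo `π ^ (s - (d - 1))`. Hence
`#CX(π ^ (1 + s)) = #(CX ∖ 0)(π ^ (1 + s)) + q ^ ((n + 1) * min s (d - 1)) * #CX(π ^ (s - (d - 1)))`
(with `#CX(π ^ 0) = 1`), and unrolling this recursion gives the sum.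

For the punctured cone, the lifts of a solution `y` modulo `π ^ m` (`m ≥ 1`) to `π ^ (m + 1)` are
`y + π ^ m • z` with `z ∈ κ ^ (n + 1)`. Writing `f y = π ^ m * e`, Taylor expansion shows that
such a lift is a solution iff `e + ∇f(y) ⬝ z ≡ 0 mod π`. Smoothness makes `∇f(y) ≢ 0 mod π`,
so this affine hyperplane has `q ^ n` points.
-/

open MvPolynomial

section Counting

theorem AddMonoidHom.card_subtype_comp_of_surjective {M N : Type*} [AddGroup M] [AddGroup N]
    {g : M →+ N} (hg : Function.Surjective g) (P : N → Prop) :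
    Nat.card {m // P (g m)} = Nat.card g.ker * Nat.card {n // P n} := by
  rw [← Nat.card_congr (Equiv.sigmaSubtypeFiberEquivSubtype g fun _ => Iff.rfl),
    Nat.card_congr (Equiv.sigmaEquivProdOfEquiv (β₁ := fun n : Subtype P => {m // g m = n})
      fun n => g.fiberEquivKerOfSurjective hg n),
    Nat.card_prod, mul_comm]

theorem AddMonoidHom.card_eq_card_ker_mul_of_surjective {M N : Type*} [AddGroup M] [AddGroup N]
    {g : M →+ N} (hg : Function.Surjective g) : Nat.card M = Nat.card g.ker * Nat.card N := by
  simpa using g.card_subtype_comp_of_surjective hg fun _ => True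

theorem Nat.card_eq_mul_of_forall_card_fiber {X Y : Type*} [Finite X] (g : X → Y) {k : ℕ}
    (hk : ∀ y, Nat.card {x // g x = y} = k) : Nat.card X = k * Nat.card Y := by
  rw [← Nat.card_congr (Equiv.sigmaFiberEquiv g),
    Nat.card_congr (Equiv.sigmaEquivProdOfEquiv fun y => Finite.equivFinOfCardEq (hk y)),
    Nat.card_prod, Nat.card_fin, mul_comm]

theorem Nat.card_subtype_eq_add_card_and_not {X : Type*} [Finite X] (P Q : X → Prop) :
    Nat.card {x // P x} = Nat.card {x // P x ∧ Q x} + Nat.card {x // P x ∧ ¬ Q x} := by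
  classical
  rw [← Nat.card_sum]
  exact Nat.card_congr <| (Equiv.sumCompl fun x : {x // P x} => Q x).symm.trans <|
    (Equiv.subtypeSubtypeEquivSubtypeInter P Q).sumCongr
      (Equiv.subtypeSubtypeEquivSubtypeInter P fun x => ¬ Q x)

theorem card_dotProduct_eq {K σ : Type*} [Field K] [Finite K] [Fintype σ] {c : σ → K} (hc : c ≠ 0)
    (b : K) : Nat.card {z : σ → K // c ⬝ᵥ z = b} = Nat.card K ^ (Nat.card σ - 1) := by
  classical
  obtain ⟨j, hj⟩ := Function.ne_iff.mp hc
  let L : (σ → K) →+ K := AddMonoidHom.mk' (c ⬝ᵥ ·) (dotProduct_add c)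
  have hL : Function.Surjective L := fun t =>
    ⟨Pi.single j (t / c j), by simp [L, dotProduct_single, mul_div_cancel₀ t hj]⟩
  have hσ : Nat.card σ - 1 + 1 = Nat.card σ :=
    Nat.sub_add_cancel (Nat.card_pos_iff.mpr ⟨⟨j⟩, inferInstance⟩)
  have h := L.card_eq_card_ker_mul_of_surjective hL
  rw [Nat.card_fun, ← hσ, pow_succ] at h
  have hfiber : Nat.card {z // c ⬝ᵥ z = b} = Nat.card L.ker := by
    have h := L.card_subtype_comp_of_surjective hL (· = b)
    rwa [Nat.card_unique (α := {n : K // n = b}), mul_one] at h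
  rw [hfiber]
  exact (Nat.eq_of_mul_eq_mul_right Nat.card_pos h).symm

theorem closed_form_of_recursion {A U : ℕ → ℕ} {q k d : ℕ} (hd : 1 ≤ d) (h0 : A 0 = 1)
    (hA : ∀ s, A (1 + s) = U (1 + s) + q ^ (k * min s (d - 1)) * A (s - (d - 1))) (r : ℕ) :
    A r = ∑ i ∈ Finset.range ((r + d - 1) / d), q ^ (k * (d - 1) * i) * U (r - d * i) +
      q ^ (k * (r - (r + d - 1) / d)) := by
  induction r using Nat.strong_induction_on with
  | _ r ih =>
  obtain _ | s := r
  · simp [h0, Nat.div_eq_of_lt (show d - 1 < d by omega)]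
  set c := s / d with hc
  have hsucc : (s + 1 + d - 1) / d = c + 1 := by
    rw [show s + 1 + d - 1 = s + d by omega, Nat.add_div_right s (by omega)]
  have hprev : (s - (d - 1) + d - 1) / d = c := by
    rcases le_total (d - 1) s with h | h
    · rw [show s - (d - 1) + d - 1 = s by omega]
    · rw [Nat.div_eq_of_lt (by omega), hc, Nat.div_eq_of_lt (by omega)]
  have hexp : min s (d - 1) + (s - (d - 1) - c) = s + 1 - (c + 1) := by
    rcases Nat.eq_zero_or_pos c with h | h
    · omega
    · have h1 : c * d ≤ s := Nat.div_mul_le_self s d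
      have h2 : c + d ≤ c * d + 1 := by nlinarith -- `(c - 1) * (d - 1) ≥ 0`
      omega
  rw [add_comm s 1, hA s, ih _ (by omega), hprev, add_comm 1 s, hsucc, Finset.sum_range_succ',
    mul_add, Finset.mul_sum, ← pow_add, ← mul_add, hexp]
  simp only [mul_zero, pow_zero, one_mul, Nat.sub_zero]
  have hterm : ∀ i ∈ Finset.range c,
      q ^ (k * min s (d - 1)) * (q ^ (k * (d - 1) * i) * U (s - (d - 1) - d * i)) =
        q ^ (k * (d - 1) * (i + 1)) * U (s + 1 - d * (i + 1)) := by
    intro i hi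
    have hds : d ≤ s := (Nat.one_le_div_iff hd).mp (by have := Finset.mem_range.mp hi; omega)
    rw [min_eq_right (by omega), ← mul_assoc, ← pow_add, mul_add d, mul_one,
      show s - (d - 1) - d * i = s + 1 - (d * i + d) by omega]
    ring
  rw [Finset.sum_congr rfl hterm]
  ring

end Counting


namespace MvPolynomial

variable {A σ : Type*} [CommRing A]

theorem IsHomogeneous.eval_smul {F : MvPolynomial σ A} {d : ℕ} (hF : F.IsHomogeneous d)
    (c : A) (x : σ → A) : eval (c • x) F = c ^ d * eval x F := by
  rw [eval_eq, eval_eq, Finset.mul_sum]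
  refine Finset.sum_congr rfl fun s hs => ?_
  have hdeg : ∑ i ∈ s.support, s i = d := by
    simpa [Finsupp.weight_apply, Finsupp.sum] using hF (mem_support_iff.mp hs)
  simp only [Pi.smul_apply, smul_eq_mul, mul_pow, Finset.prod_mul_distrib,
    Finset.prod_pow_eq_pow_sum, hdeg]
  ring

theorem eval_map_comp {B : Type*} [CommRing B] (g : A →+* B) (x : σ → A) (F : MvPolynomial σ A) :
    eval (g ∘ x) (F.map g) = g (eval x F) := by
  rw [eval_map, eval₂_comp]

theorem exists_eval_add_smul_eq [Fintype σ] (F : MvPolynomial σ A) (x y : σ → A) (t : A) :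
    ∃ c, eval (x + t • y) F = eval x F + t * ∑ j, y j * eval x (pderiv j F) + t ^ 2 * c := by
  classical
  induction F using MvPolynomial.induction_on with
  | C a => exact ⟨0, by simp⟩
  | add p q hp hq =>
    obtain ⟨cp, hcp⟩ := hp
    obtain ⟨cq, hcq⟩ := hq
    exact ⟨cp + cq, by simp only [map_add, hcp, hcq, mul_add, Finset.sum_add_distrib]; ring⟩
  | mul_X p i hp =>
    obtain ⟨c, hc⟩ := hp
    refine ⟨(∑ j, y j * eval x (pderiv j p)) * y i + c * x i + t * (c * y i), ?_⟩
    have hsum : ∑ j, y j * eval x (pderiv j (p * X i))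
        = (∑ j, y j * eval x (pderiv j p)) * x i + y i * eval x p := by
      simp only [Derivation.leibniz, pderiv_X, smul_eq_mul, map_add, map_mul, eval_X,
        Pi.single_apply, mul_add, Finset.sum_add_distrib, Finset.sum_mul]
      simp only [apply_ite (eval x), map_one, map_zero, mul_ite, mul_one, mul_zero,
        Finset.sum_ite_eq, Finset.mem_univ, if_true]
      rw [add_comm]
      congr 1
      exact Finset.sum_congr rfl fun j _ => by ring
    simp only [map_mul, hc, hsum, eval_X, Pi.add_apply, Pi.smul_apply, smul_eq_mul]
    ring

def IsSmoothAwayFromZero (F : MvPolynomial σ A) : Prop :=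
  ∀ x : σ → A, (∃ j, x j ≠ 0) → eval x F = 0 → ∃ j, eval x (pderiv j F) ≠ 0

end MvPolynomial


abbrev QuotPow {R : Type*} [CommRing R] (π : R) (m : ℕ) : Type _ := R ⧸ Ideal.span {π ^ m}

namespace QuotPow

variable {R : Type*} [CommRing R] (π : R)

def reduce {a b : ℕ} (h : b ≤ a) : QuotPow π a →+* QuotPow π b :=
  Ideal.Quotient.factor (Ideal.span_singleton_le_span_singleton.mpr (pow_dvd_pow π h))

@[simp]
theorem reduce_mk {a b : ℕ} (h : b ≤ a) (u : R) :
    reduce π h (Ideal.Quotient.mk _ u) = Ideal.Quotient.mk _ u :=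
  Ideal.Quotient.factor_mk _ u

theorem reduce_comp_mk {a b : ℕ} (h : b ≤ a) :
    (reduce π h).comp (Ideal.Quotient.mk _) = Ideal.Quotient.mk _ :=
  Ideal.Quotient.factor_comp_mk _

theorem reduce_surjective {a b : ℕ} (h : b ≤ a) : Function.Surjective (reduce π h) :=
  Ideal.Quotient.factor_surjective _

def mulPow (b c : ℕ) : QuotPow π c →ₗ[R] QuotPow π (b + c) :=
  Submodule.mapQ _ _ (LinearMap.mulLeft R (π ^ b)) fun u hu => by
    obtain ⟨v, rfl⟩ := Ideal.mem_span_singleton'.mp hu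
    exact Ideal.mem_span_singleton'.mpr ⟨v, by rw [LinearMap.mulLeft_apply, pow_add]; ring⟩

@[simp]
theorem mulPow_mk (b c : ℕ) (u : R) :
    mulPow π b c (Ideal.Quotient.mk _ u) = Ideal.Quotient.mk _ (π ^ b * u) :=
  rfl

variable {π}

theorem mul_mem_span_pow_add_iff [IsDomain R] (hπ : π ≠ 0) (b c : ℕ) (u : R) :
    π ^ b * u ∈ Ideal.span {π ^ (b + c)} ↔ u ∈ Ideal.span {π ^ c} := by
  simp only [Ideal.mem_span_singleton, pow_add, mul_dvd_mul_iff_left (pow_ne_zero b hπ)]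

theorem mulPow_injective [IsDomain R] (hπ : π ≠ 0) (b c : ℕ) :
    Function.Injective (mulPow π b c) := by
  refine (injective_iff_map_eq_zero _).mpr fun z hz => ?_
  obtain ⟨u, rfl⟩ := Ideal.Quotient.mk_surjective z
  rw [mulPow_mk, Ideal.Quotient.eq_zero_iff_mem, mul_mem_span_pow_add_iff hπ] at hz
  exact Ideal.Quotient.eq_zero_iff_mem.mpr hz

theorem reduce_eq_zero_iff (b c : ℕ) (x : QuotPow π (b + c)) :
    reduce π (Nat.le_add_right b c) x = 0 ↔ ∃ z, mulPow π b c z = x := by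
  constructor
  · obtain ⟨u, rfl⟩ := Ideal.Quotient.mk_surjective x
    rw [reduce_mk, Ideal.Quotient.eq_zero_iff_mem, Ideal.mem_span_singleton]
    rintro ⟨v, rfl⟩
    exact ⟨Ideal.Quotient.mk _ v, mulPow_mk π b c v⟩
  · rintro ⟨z, rfl⟩
    obtain ⟨v, rfl⟩ := Ideal.Quotient.mk_surjective z
    rw [mulPow_mk, reduce_mk, Ideal.Quotient.eq_zero_iff_mem]
    exact Ideal.mul_mem_right v _ (Ideal.mem_span_singleton_self _)

variable {σ : Type*}

noncomputable def liftEquiv [IsDomain R] (hπ : π ≠ 0) {b c : ℕ} (x₀ : σ → QuotPow π (b + c)) :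
    (σ → QuotPow π c) ≃ {x : σ → QuotPow π (b + c) //
      reduce π (Nat.le_add_right b c) ∘ x = reduce π (Nat.le_add_right b c) ∘ x₀} :=
  Equiv.ofBijective
    (fun z => ⟨x₀ + mulPow π b c ∘ z, funext fun j => by
      simp [(reduce_eq_zero_iff b c _).mpr ⟨z j, rfl⟩]⟩)
    ⟨fun z z' h => (mulPow_injective hπ b c).comp_left (add_left_cancel (congrArg Subtype.val h)),
     fun ⟨x, hx⟩ => by
      choose z hz using fun j =>
        (reduce_eq_zero_iff b c (x j - x₀ j)).mp (by rw [map_sub, sub_eq_zero]; exact congrFun hx j)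
      exact ⟨z, Subtype.ext (funext fun j => by simp [hz])⟩⟩

theorem card_lifts [IsDomain R] (hπ : π ≠ 0) {b c : ℕ} (x₀ : σ → QuotPow π (b + c))
    (P : (σ → QuotPow π (b + c)) → Prop) :
    Nat.card {x // reduce π (Nat.le_add_right b c) ∘ x = reduce π (Nat.le_add_right b c) ∘ x₀ ∧
      P x} = Nat.card {z : σ → QuotPow π c // P (x₀ + mulPow π b c ∘ z)} :=
  Nat.card_congr <| (Equiv.subtypeSubtypeEquivSubtypeInter _ P).symm.trans
    (Equiv.subtypeEquiv (liftEquiv hπ x₀) fun _ => Iff.rfl).symm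

theorem eval_reduce_comp {a b : ℕ} (h : b ≤ a) (F : MvPolynomial σ R) (x : σ → QuotPow π a) :
    eval (reduce π h ∘ x) (F.map (Ideal.Quotient.mk _)) =
      reduce π h (eval x (F.map (Ideal.Quotient.mk _))) := by
  rw [← eval_map_comp, map_map, reduce_comp_mk]

theorem card_subtype_comp_reduce [IsDomain R] (hπ : π ≠ 0) [Finite σ] (b c : ℕ)
    (P : (σ → QuotPow π b) → Prop) :
    Nat.card {x : σ → QuotPow π (b + c) // P (reduce π (Nat.le_add_right b c) ∘ x)} =
      Nat.card (QuotPow π c) ^ Nat.card σ * Nat.card {y // P y} := by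
  let g := (reduce π (Nat.le_add_right b c)).toAddMonoidHom.compLeft σ
  have hker : Nat.card g.ker = Nat.card (QuotPow π c) ^ Nat.card σ := by
    rw [← Nat.card_fun, Nat.card_congr (liftEquiv hπ (0 : σ → QuotPow π (b + c)))]
    refine Nat.card_congr (Equiv.subtypeEquivRight fun x => ?_)
    simp [g, _root_.funext_iff]
  rw [← hker]
  exact g.card_subtype_comp_of_surjective (reduce_surjective π (Nat.le_add_right b c)).comp_left P

theorem card_quotPow_one : Nat.card (QuotPow π 1) = Nat.card (R ⧸ Ideal.span {π}) := by
  rw [QuotPow, pow_one]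

theorem card_quotPow [IsDomain R] (hπ : π ≠ 0) :
    ∀ m, Nat.card (QuotPow π m) = Nat.card (R ⧸ Ideal.span {π}) ^ m
  | 0 => by simp
  | m + 1 => by
    have h := card_subtype_comp_reduce hπ (σ := Unit) m 1 fun _ => True
    simp only [Nat.card_subtype_true, Nat.card_fun,
      Nat.card_eq_fintype_card, Fintype.card_unique, pow_one] at h
    rw [h, card_quotPow_one, card_quotPow hπ m, pow_succ, mul_comm]

theorem isUnit_mk_iff [IsLocalRing R] (hπ : ¬IsUnit π) {m : ℕ} (hm : m ≠ 0) (u : R) :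
    IsUnit (Ideal.Quotient.mk (Ideal.span {π ^ m}) u) ↔ IsUnit u := by
  refine ⟨fun h => ?_, (·.map _)⟩
  have hle : Ideal.span {π ^ m} ≤ Ideal.jacobson ⊥ := by
    rw [IsLocalRing.jacobson_eq_maximalIdeal ⊥ bot_ne_top, Ideal.span_singleton_le_iff_mem,
      IsLocalRing.mem_maximalIdeal, mem_nonunits_iff, isUnit_pow_iff hm]
    exact hπ
  have := isLocalHom_of_le_jacobson_bot _ hle
  exact h.of_map

theorem isUnit_reduce_iff [IsLocalRing R] (hπ : ¬IsUnit π) {a b : ℕ} (h : b ≤ a) (hb : b ≠ 0)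
    (x : QuotPow π a) : IsUnit (reduce π h x) ↔ IsUnit x := by
  obtain ⟨u, rfl⟩ := Ideal.Quotient.mk_surjective x
  rw [reduce_mk, isUnit_mk_iff hπ hb, isUnit_mk_iff hπ (by omega)]

theorem not_isUnit_iff_reduce_eq_zero [IsDomain R] [IsDiscreteValuationRing R]
    (hπ : Irreducible π) (s : ℕ) (x : QuotPow π (1 + s)) :
    ¬IsUnit x ↔ reduce π (Nat.le_add_right 1 s) x = 0 := by
  obtain ⟨u, rfl⟩ := Ideal.Quotient.mk_surjective x
  rw [reduce_mk, isUnit_mk_iff hπ.not_isUnit (by omega), Ideal.Quotient.eq_zero_iff_mem, pow_one,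
    ← hπ.maximalIdeal_eq, IsLocalRing.mem_maximalIdeal, mem_nonunits_iff]

theorem finite [IsDomain R] [Finite (R ⧸ Ideal.span {π})] (hπ : π ≠ 0) (m : ℕ) :
    Finite (QuotPow π m) :=
  Nat.finite_of_card_ne_zero <| by
    rw [card_quotPow hπ]
    exact pow_ne_zero _ Nat.card_pos.ne'

theorem mk_pow_mul_eq_zero_iff [IsDomain R] (hπ : π ≠ 0) (b e : ℕ) (w : QuotPow π (b + e)) :
    Ideal.Quotient.mk _ (π ^ e) * w = 0 ↔ reduce π (Nat.le_add_right b e) w = 0 := by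
  obtain ⟨u, rfl⟩ := Ideal.Quotient.mk_surjective w
  rw [← map_mul, reduce_mk, Ideal.Quotient.eq_zero_iff_mem, Ideal.Quotient.eq_zero_iff_mem,
    add_comm b e, mul_mem_span_pow_add_iff hπ]

end QuotPow

section ConeCount

variable {R σ : Type*} [CommRing R]

variable (π : R) in
noncomputable def coneCount (F : MvPolynomial σ R) (m : ℕ) : ℕ :=
  Nat.card {x : σ → QuotPow π m // eval x (F.map (Ideal.Quotient.mk _)) = 0}

variable (π : R) in
noncomputable def puncturedConeCount (F : MvPolynomial σ R) (m : ℕ) : ℕ :=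
  Nat.card {x : σ → QuotPow π m // eval x (F.map (Ideal.Quotient.mk _)) = 0 ∧ ∃ j, IsUnit (x j)}

variable {π : R}

theorem coneCount_zero (F : MvPolynomial σ R) : coneCount π F 0 = 1 := by
  have : Subsingleton (QuotPow π 0) := Ideal.Quotient.subsingleton_iff.mpr (by simp)
  exact Nat.card_eq_one_iff_unique.mpr ⟨inferInstance, ⟨⟨0, Subsingleton.elim _ _⟩⟩⟩

open QuotPow in
theorem card_pow_mul_eval_eq_zero [IsDomain R] [Finite (R ⧸ Ideal.span {π})] [Finite σ]
    (hπ : π ≠ 0) (F : MvPolynomial σ R) (s e : ℕ) :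
    Nat.card {y : σ → QuotPow π s //
        Ideal.Quotient.mk _ (π ^ e) * eval y (F.map (Ideal.Quotient.mk _)) = 0} =
      Nat.card (R ⧸ Ideal.span {π}) ^ (Nat.card σ * min s e) * coneCount π F (s - e) := by
  rcases le_total s e with hse | hes
  · have hzero : Ideal.Quotient.mk (Ideal.span {π ^ s}) (π ^ e) = 0 :=
      Ideal.Quotient.eq_zero_iff_mem.mpr (Ideal.mem_span_singleton.mpr (pow_dvd_pow π hse))
    rw [Nat.sub_eq_zero_of_le hse, coneCount_zero, min_eq_left hse, mul_one, pow_mul',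
      ← card_quotPow hπ, ← Nat.card_fun]
    simp [hzero]
  · obtain ⟨b, rfl⟩ : ∃ b, s = b + e := ⟨s - e, by omega⟩
    rw [min_eq_right hes, Nat.add_sub_cancel, pow_mul', ← card_quotPow hπ, coneCount,
      ← card_subtype_comp_reduce hπ b e]
    refine Nat.card_congr (Equiv.subtypeEquivRight fun y => ?_)
    rw [mk_pow_mul_eq_zero_iff hπ, eval_reduce_comp]

open QuotPow in
theorem card_nonunit_solutions [IsDomain R] [IsDiscreteValuationRing R] (hπ : Irreducible π)
    {F : MvPolynomial σ R} {d : ℕ} (hd : 1 ≤ d) (hF : F.IsHomogeneous d) (s : ℕ) :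
    Nat.card {x : σ → QuotPow π (1 + s) //
        eval x (F.map (Ideal.Quotient.mk _)) = 0 ∧ ¬∃ j, IsUnit (x j)} =
      Nat.card {y : σ → QuotPow π s //
        Ideal.Quotient.mk _ (π ^ (d - 1)) * eval y (F.map (Ideal.Quotient.mk _)) = 0} := by
  have hnonunit (x : σ → QuotPow π (1 + s)) : (¬∃ j, IsUnit (x j)) ↔
      reduce π (Nat.le_add_right 1 s) ∘ x =
        reduce π (Nat.le_add_right 1 s) ∘ fun _ : σ => (0 : QuotPow π (1 + s)) := by
    simp only [not_exists, not_isUnit_iff_reduce_eq_zero hπ, _root_.funext_iff,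
      Function.comp_apply, map_zero]
  rw [Nat.card_congr (Equiv.subtypeEquivRight fun x =>
      and_comm.trans (and_congr_left' (hnonunit x))), card_lifts hπ.ne_zero]
  refine Nat.card_congr (Equiv.subtypeEquivRight fun z => ?_)
  obtain ⟨z, rfl⟩ := Ideal.Quotient.mk_surjective.comp_left z
  have hlift : (fun _ => 0) + mulPow π 1 s ∘ (Ideal.Quotient.mk _ ∘ z) =
      Ideal.Quotient.mk _ ∘ (π • z) := by
    funext j
    simp
  have hpow : π ^ d = π ^ 1 * π ^ (d - 1) := by rw [← pow_add, Nat.add_sub_cancel' hd]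
  rw [hlift, eval_map_comp, eval_map_comp, hF.eval_smul, ← map_mul,
    Ideal.Quotient.eq_zero_iff_mem, Ideal.Quotient.eq_zero_iff_mem, hpow, mul_assoc]
  exact mul_mem_span_pow_add_iff hπ.ne_zero 1 s _

theorem coneCount_one_add [IsDomain R] [IsDiscreteValuationRing R] [Finite (R ⧸ Ideal.span {π})]
    [Finite σ] (hπ : Irreducible π) {F : MvPolynomial σ R} {d : ℕ} (hd : 1 ≤ d)
    (hF : F.IsHomogeneous d) (s : ℕ) :
    coneCount π F (1 + s) = puncturedConeCount π F (1 + s) +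
      Nat.card (R ⧸ Ideal.span {π}) ^ (Nat.card σ * min s (d - 1)) *
        coneCount π F (s - (d - 1)) := by
  have := QuotPow.finite hπ.ne_zero (1 + s)
  rw [coneCount, puncturedConeCount,
    Nat.card_subtype_eq_add_card_and_not _ fun x => ∃ j, IsUnit (x j),
    card_nonunit_solutions hπ hd hF, card_pow_mul_eval_eq_zero hπ.ne_zero]

end ConeCount

section Hensel

variable {R σ : Type*} [CommRing R] {π : R}

theorem exists_eval_pderiv_notMem_of_isSmoothAwayFromZero (hπ : ¬IsUnit π)
    {F : MvPolynomial σ R}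
    (hF : (F.map (Ideal.Quotient.mk (Ideal.span {π}))).IsSmoothAwayFromZero) {y : σ → R}
    (hunit : ∃ j, IsUnit (y j)) (hzero : eval y F ∈ Ideal.span {π}) :
    ∃ j, eval y (pderiv j F) ∉ Ideal.span {π} := by
  obtain ⟨j₀, hj₀⟩ := hunit
  have hne : Ideal.Quotient.mk (Ideal.span {π}) (y j₀) ≠ 0 := fun h =>
    hπ (isUnit_of_dvd_unit (Ideal.mem_span_singleton.mp (Ideal.Quotient.eq_zero_iff_mem.mp h)) hj₀)
  obtain ⟨j, hj⟩ := hF (Ideal.Quotient.mk _ ∘ y) ⟨j₀, hne⟩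
    (by rw [eval_map_comp, Ideal.Quotient.eq_zero_iff_mem]; exact hzero)
  rw [pderiv_map, eval_map_comp, Ne, Ideal.Quotient.eq_zero_iff_mem] at hj
  exact ⟨j, hj⟩

theorem mk_eval_add_pow_smul_eq_zero_iff [IsDomain R] [Fintype σ] (hπ : π ≠ 0)
    (F : MvPolynomial σ R) {m : ℕ} (hm : m ≠ 0) (y z : σ → R) {e : R}
    (he : eval y F = π ^ m * e) :
    Ideal.Quotient.mk (Ideal.span {π ^ (m + 1)}) (eval (y + π ^ m • z) F) = 0 ↔
      (Ideal.Quotient.mk (Ideal.span {π ^ 1}) ∘ fun j => eval y (pderiv j F)) ⬝ᵥ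
        (Ideal.Quotient.mk _ ∘ z) = -Ideal.Quotient.mk _ e := by
  obtain ⟨c, hc⟩ := exists_eval_add_smul_eq F y z (π ^ m)
  have hvanish : Ideal.Quotient.mk (Ideal.span {π ^ 1}) (π ^ m * c) = 0 :=
    Ideal.Quotient.eq_zero_iff_mem.mpr
      (Ideal.mul_mem_right c _ (Ideal.mem_span_singleton.mpr (pow_dvd_pow π (by omega))))
  rw [hc, he, show π ^ m * e + π ^ m * ∑ j, z j * eval y (pderiv j F) + (π ^ m) ^ 2 * c =
      π ^ m * (e + ∑ j, z j * eval y (pderiv j F) + π ^ m * c) by ring,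
    Ideal.Quotient.eq_zero_iff_mem, QuotPow.mul_mem_span_pow_add_iff hπ m 1,
    ← Ideal.Quotient.eq_zero_iff_mem, map_add, map_add, hvanish, add_zero, map_sum,
    eq_neg_iff_add_eq_zero, add_comm]
  simp only [dotProduct, Function.comp_apply, map_mul, mul_comm]

open QuotPow in
theorem card_lifts_eval_eq_zero [IsDomain R] [IsDiscreteValuationRing R]
    [Finite (R ⧸ Ideal.span {π})] [Fintype σ] (hπ : Irreducible π) (F : MvPolynomial σ R)
    {m : ℕ} (hm : m ≠ 0) {y : σ → R} (hy : eval y F ∈ Ideal.span {π ^ m})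
    (hgrad : ∃ j, eval y (pderiv j F) ∉ Ideal.span {π}) :
    Nat.card {x : σ → QuotPow π (m + 1) //
        reduce π (Nat.le_add_right m 1) ∘ x =
          reduce π (Nat.le_add_right m 1) ∘ (Ideal.Quotient.mk _ ∘ y) ∧
        eval x (F.map (Ideal.Quotient.mk _)) = 0} =
      Nat.card (R ⧸ Ideal.span {π}) ^ (Nat.card σ - 1) := by
  obtain ⟨e, he⟩ := Ideal.mem_span_singleton.mp hy
  have : (Ideal.span {π ^ 1}).IsMaximal := by
    rw [pow_one]
    exact PrincipalIdealRing.isMaximal_of_irreducible hπ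
  let _ : Field (QuotPow π 1) := Ideal.Quotient.field _
  have := QuotPow.finite hπ.ne_zero 1
  have hc : (Ideal.Quotient.mk (Ideal.span {π ^ 1}) ∘ fun j => eval y (pderiv j F)) ≠ 0 := by
    obtain ⟨j, hj⟩ := hgrad
    exact Function.ne_iff.mpr ⟨j, by simpa [Ideal.Quotient.eq_zero_iff_mem] using hj⟩
  rw [card_lifts hπ.ne_zero, ← card_quotPow_one,
    ← card_dotProduct_eq hc (-Ideal.Quotient.mk _ e)]
  refine Nat.card_congr (Equiv.subtypeEquivRight fun z => ?_)
  obtain ⟨z, rfl⟩ := Ideal.Quotient.mk_surjective.comp_left z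
  have hlift : Ideal.Quotient.mk _ ∘ y + mulPow π m 1 ∘ (Ideal.Quotient.mk _ ∘ z) =
      Ideal.Quotient.mk _ ∘ (y + π ^ m • z) := by
    funext j
    simp
  rw [hlift, eval_map_comp]
  exact mk_eval_add_pow_smul_eq_zero_iff hπ.ne_zero F hm y z he

open QuotPow in
theorem puncturedConeCount_succ [IsDomain R] [IsDiscreteValuationRing R]
    [Finite (R ⧸ Ideal.span {π})] [Fintype σ] (hπ : Irreducible π) {F : MvPolynomial σ R}
    (hF : (F.map (Ideal.Quotient.mk (Ideal.span {π}))).IsSmoothAwayFromZero) {m : ℕ}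
    (hm : m ≠ 0) :
    puncturedConeCount π F (m + 1) =
      Nat.card (R ⧸ Ideal.span {π}) ^ (Nat.card σ - 1) * puncturedConeCount π F m := by
  have := QuotPow.finite hπ.ne_zero (m + 1)
  let g : {x : σ → QuotPow π (m + 1) //
      eval x (F.map (Ideal.Quotient.mk _)) = 0 ∧ ∃ j, IsUnit (x j)} →
      {x : σ → QuotPow π m // eval x (F.map (Ideal.Quotient.mk _)) = 0 ∧ ∃ j, IsUnit (x j)} :=
    fun x => ⟨reduce π (Nat.le_add_right m 1) ∘ x.1, by rw [eval_reduce_comp, x.2.1, map_zero],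
      x.2.2.imp fun j hj => hj.map _⟩
  refine Nat.card_eq_mul_of_forall_card_fiber g fun ⟨y, hy, hunit⟩ => ?_
  obtain ⟨y, rfl⟩ := Ideal.Quotient.mk_surjective.comp_left y
  have hred : reduce π (Nat.le_add_right m 1) ∘ (Ideal.Quotient.mk _ ∘ y) =
      Ideal.Quotient.mk _ ∘ y := by
    funext j
    simp
  rw [eval_map_comp, Ideal.Quotient.eq_zero_iff_mem] at hy
  have hunit' : ∃ j, IsUnit (y j) :=
    hunit.imp fun j hj => (isUnit_mk_iff hπ.not_isUnit hm _).mp hj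
  have hgrad := exists_eval_pderiv_notMem_of_isSmoothAwayFromZero hπ.not_isUnit hF hunit'
    (Ideal.span_singleton_le_span_singleton.mpr (dvd_pow_self π hm) hy)
  rw [← card_lifts_eval_eq_zero hπ F hm hy hgrad, hred]
  refine Nat.card_congr <| (Equiv.subtypeEquivRight fun x => Subtype.ext_iff).trans <|
    (Equiv.subtypeSubtypeEquivSubtypeInter
      (fun x => eval x (F.map (Ideal.Quotient.mk _)) = 0 ∧ ∃ j, IsUnit (x j))
      (reduce π (Nat.le_add_right m 1) ∘ · = Ideal.Quotient.mk _ ∘ y)).trans <|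
    Equiv.subtypeEquivRight fun x => ?_
  -- a lift of `y` inherits its unit coordinate
  refine ⟨fun ⟨⟨h0, _⟩, hx⟩ => ⟨hx, h0⟩, fun ⟨hx, h0⟩ => ⟨⟨h0, ?_⟩, hx⟩⟩
  obtain ⟨j, hj⟩ := hunit
  refine ⟨j, (isUnit_reduce_iff hπ.not_isUnit (Nat.le_add_right m 1) hm (x j)).mp ?_⟩
  rwa [← Function.comp_apply (f := reduce π _), hx]

theorem puncturedConeCount_eq_pow_mul [IsDomain R] [IsDiscreteValuationRing R]
    [Finite (R ⧸ Ideal.span {π})] [Fintype σ] (hπ : Irreducible π) {F : MvPolynomial σ R}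
    (hF : (F.map (Ideal.Quotient.mk (Ideal.span {π}))).IsSmoothAwayFromZero) {m : ℕ}
    (hm : 1 ≤ m) :
    puncturedConeCount π F m =
      Nat.card (R ⧸ Ideal.span {π}) ^ ((m - 1) * (Nat.card σ - 1)) * puncturedConeCount π F 1 := by
  induction m, hm using Nat.le_induction with
  | base => simp
  | succ m hm ih =>
    obtain ⟨m, rfl⟩ : ∃ m', m = m' + 1 := ⟨m - 1, by omega⟩
    rw [puncturedConeCount_succ hπ hF (by omega), ih, ← mul_assoc, ← pow_add, Nat.add_sub_cancel,
      Nat.add_sub_cancel]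
    ring

theorem puncturedConeCount_one (F : MvPolynomial σ R) :
    puncturedConeCount π F 1 = Nat.card {x : σ → R ⧸ Ideal.span {π} //
      eval x (F.map (Ideal.Quotient.mk _)) = 0 ∧ ∃ j, IsUnit (x j)} :=
  -- `rw [pow_one]` fails here: the type of the tuples depends on the ideal
  congrArg (fun p => Nat.card {x : σ → R ⧸ Ideal.span {p} //
    eval x (F.map (Ideal.Quotient.mk _)) = 0 ∧ ∃ j, IsUnit (x j)}) (pow_one π)

end Hensel

theorem stmt_15_general (R : Type*) [CommRing R] [IsDomain R] [IsDiscreteValuationRing R]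
    (π : R) (hπ : Irreducible π)
    [Finite (R ⧸ Ideal.span {π})]
    (n d : ℕ) (hd : 1 ≤ d)
    (f : MvPolynomial (Fin (n + 1)) R) (hf : f.IsHomogeneous d)
    (hsmooth : ∀ x : Fin (n + 1) → R ⧸ Ideal.span {π},
      (∃ j, x j ≠ 0) →
      MvPolynomial.eval x (f.map (Ideal.Quotient.mk (Ideal.span {π}))) = 0 →
      ∃ j, MvPolynomial.eval x
        (MvPolynomial.pderiv j (f.map (Ideal.Quotient.mk (Ideal.span {π})))) ≠ 0)
    (r : ℕ) :
    (Nat.card {x : Fin (n + 1) → R ⧸ Ideal.span {π ^ r} //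
        MvPolynomial.eval x (f.map (Ideal.Quotient.mk (Ideal.span {π ^ r}))) = 0} =
      (∑ i ∈ Finset.range ((r + d - 1) / d),
        Nat.card (R ⧸ Ideal.span {π}) ^ ((n + 1) * (d - 1) * i) *
          Nat.card {x : Fin (n + 1) → R ⧸ Ideal.span {π ^ (r - d * i)} //
            MvPolynomial.eval x
              (f.map (Ideal.Quotient.mk (Ideal.span {π ^ (r - d * i)}))) = 0 ∧
            ∃ j, IsUnit (x j)}) +
      Nat.card (R ⧸ Ideal.span {π}) ^ ((n + 1) * (r - (r + d - 1) / d))) ∧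
    ∀ m : ℕ, 1 ≤ m →
      Nat.card {x : Fin (n + 1) → R ⧸ Ideal.span {π ^ m} //
          MvPolynomial.eval x
            (f.map (Ideal.Quotient.mk (Ideal.span {π ^ m}))) = 0 ∧
          ∃ j, IsUnit (x j)} =
        Nat.card (R ⧸ Ideal.span {π}) ^ ((m - 1) * n) *
          Nat.card {x : Fin (n + 1) → R ⧸ Ideal.span {π} //
            MvPolynomial.eval x
              (f.map (Ideal.Quotient.mk (Ideal.span {π}))) = 0 ∧
            ∃ j, IsUnit (x j)} := by
  refine ⟨?_, fun m hm => ?_⟩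
  · have h := closed_form_of_recursion hd (coneCount_zero f) (coneCount_one_add hπ hd hf) r
    rw [Nat.card_fin] at h
    exact h
  · have h := puncturedConeCount_eq_pow_mul hπ hsmooth hm
    rw [Nat.card_fin, Nat.add_sub_cancel, puncturedConeCount_one] at h
    exact h

/-- Let `R` be a (Henselian) discrete valuation ring with uniformizer `π`
and finite residue field `κ = R/π`, and `f ∈ R[x₀,…,x_n]` homogeneous of degree `d ≥ 1`
whose affine cone `CX = {f = 0}` is smooth away from the origin over `κ`.  Then for
`r ≥ 1`,
`#CX(R/π^r) = Σ_{i=0}^{⌈r/d⌉−1} (#κ)^{(n+1)(d−1)i} · #(CX∖0)(R/π^{r−di})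
  + (#κ)^{(n+1)(r−⌈r/d⌉)}`,
where `(CX∖0)(R/π^m)` is the set of solutions with at least one unit coordinate.
Moreover, by Hensel's lemma, `#(CX∖0)(R/π^m) = (#κ)^{(m−1)n} · #(CX∖0)(κ)` for `m ≥ 1`.
Here `⌈r/d⌉ = (r + d − 1)/d` in natural-number division. -/
theorem stmt_15 (R : Type*) [CommRing R] [IsDomain R] [IsDiscreteValuationRing R]
    [HenselianLocalRing R]
    (π : R) (hπ : Irreducible π)
    [Finite (R ⧸ Ideal.span {π})]
    (n d : ℕ) (hd : 1 ≤ d)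
    (f : MvPolynomial (Fin (n + 1)) R) (hf : f.IsHomogeneous d)
    (hsmooth : ∀ x : Fin (n + 1) → R ⧸ Ideal.span {π},
      (∃ j, x j ≠ 0) →
      MvPolynomial.eval x (f.map (Ideal.Quotient.mk (Ideal.span {π}))) = 0 →
      ∃ j, MvPolynomial.eval x
        (MvPolynomial.pderiv j (f.map (Ideal.Quotient.mk (Ideal.span {π})))) ≠ 0)
    (r : ℕ) (hr : 1 ≤ r) :
    (Nat.card {x : Fin (n + 1) → R ⧸ Ideal.span {π ^ r} //
        MvPolynomial.eval x (f.map (Ideal.Quotient.mk (Ideal.span {π ^ r}))) = 0} =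
      (∑ i ∈ Finset.range ((r + d - 1) / d),
        Nat.card (R ⧸ Ideal.span {π}) ^ ((n + 1) * (d - 1) * i) *
          Nat.card {x : Fin (n + 1) → R ⧸ Ideal.span {π ^ (r - d * i)} //
            MvPolynomial.eval x
              (f.map (Ideal.Quotient.mk (Ideal.span {π ^ (r - d * i)}))) = 0 ∧
            ∃ j, IsUnit (x j)}) +
      Nat.card (R ⧸ Ideal.span {π}) ^ ((n + 1) * (r - (r + d - 1) / d))) ∧
    ∀ m : ℕ, 1 ≤ m →
      Nat.card {x : Fin (n + 1) → R ⧸ Ideal.span {π ^ m} //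
          MvPolynomial.eval x
            (f.map (Ideal.Quotient.mk (Ideal.span {π ^ m}))) = 0 ∧
          ∃ j, IsUnit (x j)} =
        Nat.card (R ⧸ Ideal.span {π}) ^ ((m - 1) * n) *
          Nat.card {x : Fin (n + 1) → R ⧸ Ideal.span {π} //
            MvPolynomial.eval x
              (f.map (Ideal.Quotient.mk (Ideal.span {π}))) = 0 ∧
            ∃ j, IsUnit (x j)} :=
  stmt_15_general R π hπ n d hd f hf hsmooth r
end
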